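/- arXiv:1710.04958 — 5 statements merged into one kernel-verified Lean document; each statement's English description precedes it below -/
import Mathlib

section
/- For any Banach space X, 1<p<∞, and A ⊆ K, the UMD_p^A constant equals the UMD constant associated to the closed convex hull of A: β_{p,X}^{A} = β_{p,X}^{\overline{Conv(A)}}. -/
open MeasureTheory Filter Set
open scoped ENNReal NNReal Topology

/-- The martingale difference sequence of `f`, with the convention `mdiff f 0 = f 0`. -/
noncomputable def mdiff {Ω X : Type} [AddGroup X] (f : ℕ → Ω → X) : ℕ → Ω → X :=
  fun n => if n = 0 then f 0 else f n - f (n - 1)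

/-- `β` is an admissible constant for the `UMD_p^A` martingale-transform inequality on `X`:
for every probability space, every filtration, every `X`-valued `L^p`-martingale `f` and every
`A`-valued (deterministic) sequence `(ε_n)`, the transformed martingale
`∑_{k=0}^{N} ε_k d f_k` satisfies the `L^p` bound with constant `β`. -/
def UMDAdmissible (𝕜 : Type) [RCLike 𝕜] (X : Type) [NormedAddCommGroup X]
    [NormedSpace 𝕜 X] [NormedSpace ℝ X] [CompleteSpace X] (p : ℝ) (A : Set 𝕜)
    (β : ℝ≥0∞) : Prop :=
  ∀ (Ω : Type) (m : MeasurableSpace Ω) (μ : Measure Ω), IsProbabilityMeasure μ →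
    ∀ (ℱ : Filtration ℕ m) (f : ℕ → Ω → X), Martingale f ℱ μ →
    (∀ n, MemLp (f n) (ENNReal.ofReal p) μ) →
    ∀ (N : ℕ) (ε : ℕ → 𝕜), (∀ n, ε n ∈ A) →
    eLpNorm (fun ω => ∑ k ∈ Finset.range (N + 1), ε k • mdiff f k ω)
        (ENNReal.ofReal p) μ ≤ β * eLpNorm (f N) (ENNReal.ofReal p) μ

/-- The `UMD_p^A` constant `β_{p,X}^A ∈ [0,∞]` of `X`. -/
noncomputable def umdConst (𝕜 : Type) [RCLike 𝕜] (X : Type) [NormedAddCommGroup X]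
    [NormedSpace 𝕜 X] [NormedSpace ℝ X] [CompleteSpace X] (p : ℝ) (A : Set 𝕜) : ℝ≥0∞ :=
  sInf {β : ℝ≥0∞ | UMDAdmissible 𝕜 X p A β}

/-! For a fixed martingale and a fixed horizon `N`, the multiplier tuples `(ε₀, …, ε_N)` for which
the transform obeys the bound form the preimage of a closed `L^p`-ball under the linear map
`ε ↦ ∑ ε k • d k` into `L^p`, so they form a closed convex subset of `𝕜^{N+1}`. If it contains
`A^{N+1}`, it contains the closed convex hull of `A^{N+1}`, which is `(closure (conv A))^{N+1}`. -/

section ConvexHull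

variable {𝕜 : Type*} [RCLike 𝕜]

theorem RCLike.enorm_ofReal_of_nonneg {a : ℝ} (ha : 0 ≤ a) :
    ‖(a : 𝕜)‖ₑ = ENNReal.ofReal a := by
  rw [← ofReal_norm, RCLike.norm_ofReal, abs_of_nonneg ha]

theorem pi_closure_convexHull_subset {ι E : Type*} [Finite ι] [AddCommGroup E] [Module ℝ E]
    [TopologicalSpace E] {A : Set E} {S : Set (ι → E)} (hSc : Convex ℝ S) (hS : IsClosed S)
    (hAS : univ.pi (fun _ => A) ⊆ S) : univ.pi (fun _ => closure (convexHull ℝ A)) ⊆ S := by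
  rw [← closure_pi_set, ← convexHull_pi]
  exact hS.closure_subset_iff.2 (convexHull_min hAS hSc)

variable {ι E : Type*} [NormedAddCommGroup E] [NormedSpace 𝕜 E]

theorem convex_setOf_enorm_sum_smul_le [Fintype ι] (v : ι → E) (C : ℝ≥0∞) :
    Convex ℝ {e : ι → 𝕜 | ‖∑ i, e i • v i‖ₑ ≤ C} := by
  intro e₁ h₁ e₂ h₂ a b ha hb hab
  calc ‖∑ i, (a • e₁ + b • e₂) i • v i‖ₑ
      = ‖(a : 𝕜) • ∑ i, e₁ i • v i + (b : 𝕜) • ∑ i, e₂ i • v i‖ₑ := by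
        simp only [Pi.add_apply, Pi.smul_apply, RCLike.real_smul_eq_coe_mul, add_smul, mul_smul,
          Finset.smul_sum, Finset.sum_add_distrib]
    _ ≤ ENNReal.ofReal a * C + ENNReal.ofReal b * C := by
        refine (enorm_add_le (_ : E) _).trans ?_
        rw [enorm_smul, enorm_smul, RCLike.enorm_ofReal_of_nonneg ha,
          RCLike.enorm_ofReal_of_nonneg hb]
        exact add_le_add (mul_le_mul_right h₁ _) (mul_le_mul_right h₂ _)
    _ = C := by rw [← add_mul, ← ENNReal.ofReal_add ha hb, hab, ENNReal.ofReal_one, one_mul]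

theorem isClosed_setOf_enorm_sum_smul_le [Fintype ι] (v : ι → E) (C : ℝ≥0∞) :
    IsClosed {e : ι → 𝕜 | ‖∑ i, e i • v i‖ₑ ≤ C} :=
  isClosed_le (continuous_enorm.comp <| continuous_finsetSum _ fun i _ =>
    (continuous_apply i).smul continuous_const) continuous_const

theorem enorm_sum_smul_le_of_mem_closure_convexHull [Fintype ι] {A : Set 𝕜} (v : ι → E)
    {C : ℝ≥0∞} (h : ∀ e : ι → 𝕜, (∀ i, e i ∈ A) → ‖∑ i, e i • v i‖ₑ ≤ C) {e : ι → 𝕜}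
    (he : ∀ i, e i ∈ closure (convexHull ℝ A)) : ‖∑ i, e i • v i‖ₑ ≤ C :=
  pi_closure_convexHull_subset (S := {e : ι → 𝕜 | ‖∑ i, e i • v i‖ₑ ≤ C})
    (convex_setOf_enorm_sum_smul_le v C) (isClosed_setOf_enorm_sum_smul_le v C)
    (fun e' he' => h e' fun i => he' i trivial) (fun i _ => he i)

theorem enorm_sum_range_smul_le_of_mem_closure_convexHull {A : Set 𝕜} (v : ℕ → E) (n : ℕ)
    {C : ℝ≥0∞} (h : ∀ ε : ℕ → 𝕜, (∀ k, ε k ∈ A) → ‖∑ k ∈ Finset.range n, ε k • v k‖ₑ ≤ C)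
    {ε : ℕ → 𝕜} (hε : ∀ k, ε k ∈ closure (convexHull ℝ A)) :
    ‖∑ k ∈ Finset.range n, ε k • v k‖ₑ ≤ C := by
  obtain ⟨a, ha⟩ : A.Nonempty := convexHull_nonempty_iff.1 (closure_nonempty_iff.1 ⟨_, hε 0⟩)
  have sum_range_eq (e : ℕ → 𝕜) : ∑ k ∈ Finset.range n, e k • v k = ∑ i : Fin n, e i • v i :=
    (Fin.sum_univ_eq_sum_range (fun k => e k • v k) n).symm
  rw [sum_range_eq]
  refine enorm_sum_smul_le_of_mem_closure_convexHull (fun i : Fin n => v i) (fun e he => ?_)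
    (fun i => hε i)
  have := h (fun k => if hk : k < n then e ⟨k, hk⟩ else a)
    (fun k => by split_ifs; exacts [he _, ha])
  rw [sum_range_eq] at this
  simpa using this

end ConvexHull

section Lp

variable {𝕜 Ω X ι : Type*} [RCLike 𝕜] [MeasurableSpace Ω] {μ : Measure Ω}
  [NormedAddCommGroup X] [NormedSpace 𝕜 X] {q : ℝ≥0∞}

theorem eLpNorm_sum_smul_eq_enorm_sum_smul_toLp {g : ι → Ω → X} (hg : ∀ i, MemLp (g i) q μ)
    (s : Finset ι) (c : ι → 𝕜) :
    eLpNorm (fun ω => ∑ i ∈ s, c i • g i ω) q μ = ‖∑ i ∈ s, c i • (hg i).toLp (g i)‖ₑ := by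
  rw [Lp.enorm_def]
  refine eLpNorm_congr_ae ?_
  have hterm : ∀ᵐ ω ∂μ, ∀ i ∈ s, (c i • (hg i).toLp (g i)) ω = c i • g i ω :=
    s.eventually_all.2 fun i _ => by
      filter_upwards [Lp.coeFn_smul (c i) ((hg i).toLp (g i)), (hg i).coeFn_toLp] with ω h1 h2
      rw [h1, Pi.smul_apply, h2]
  filter_upwards [Lp.coeFn_fun_finsetSum s fun i => c i • (hg i).toLp (g i), hterm] with ω h1 h2
  rw [h1]
  exact (Finset.sum_congr rfl h2).symm

end Lp

theorem memLp_mdiff {Ω X : Type} [MeasurableSpace Ω] {μ : Measure Ω} [NormedAddCommGroup X]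
    {q : ℝ≥0∞} {f : ℕ → Ω → X} (hf : ∀ n, MemLp (f n) q μ) (n : ℕ) :
    MemLp (mdiff f n) q μ := by
  unfold mdiff
  split_ifs
  exacts [hf 0, (hf n).sub (hf (n - 1))]

namespace UMDAdmissible

variable {𝕜 : Type} [RCLike 𝕜] {X : Type} [NormedAddCommGroup X] [NormedSpace 𝕜 X]
  [NormedSpace ℝ X] [CompleteSpace X] {p : ℝ} {β : ℝ≥0∞}

theorem mono {A B : Set 𝕜} (hAB : A ⊆ B) (h : UMDAdmissible 𝕜 X p B β) :
    UMDAdmissible 𝕜 X p A β :=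
  fun Ω m μ hμ ℱ f hf hmem N ε hε => h Ω m μ hμ ℱ f hf hmem N ε fun n => hAB (hε n)

theorem closure_convexHull (hp : 1 ≤ p) {A : Set 𝕜} (h : UMDAdmissible 𝕜 X p A β) :
    UMDAdmissible 𝕜 X p (closure (convexHull ℝ A)) β := by
  intro Ω m μ hμ ℱ f hf hmem N ε hε
  have : Fact (1 ≤ ENNReal.ofReal p) := ⟨ENNReal.one_le_ofReal.2 hp⟩
  have hd := memLp_mdiff hmem
  rw [eLpNorm_sum_smul_eq_enorm_sum_smul_toLp hd]
  refine enorm_sum_range_smul_le_of_mem_closure_convexHull _ _ (fun ε' hε' => ?_) hε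
  rw [← eLpNorm_sum_smul_eq_enorm_sum_smul_toLp hd]
  exact h Ω m μ hμ ℱ f hf hmem N ε' hε'

end UMDAdmissible

theorem umdConst_closure_convexHull (𝕜 : Type) [RCLike 𝕜] (X : Type) [NormedAddCommGroup X]
    [NormedSpace 𝕜 X] [NormedSpace ℝ X] [CompleteSpace X] (p : ℝ) (hp : 1 < p)
    (A : Set 𝕜) :
    umdConst 𝕜 X p A = umdConst 𝕜 X p (closure (convexHull ℝ A)) :=
  congrArg sInf <| Set.ext fun _ =>
    ⟨UMDAdmissible.closure_convexHull hp.le,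
      UMDAdmissible.mono ((subset_convexHull ℝ A).trans subset_closure)⟩
end

section
/- Let X be a Banach space over ℂ, 1<p<∞, and A ⊆ ℂ bounded. Then β_{p,X}^A ≥ max{ (1/π)·Diam(A)·β_{p,X}, sup_{a∈A}|a| }, where Diam(A) = sup_{a₁,a₂∈A} |a₁-a₂| and β_{p,X} = β_{p,X}^{𝔻} is the UMD_p constant of X. -/
open MeasureTheory Filter Set
open scoped ENNReal NNReal Topology

/-!
For `λ` in the closed unit disk let `σ_λ(θ) = ±1` according to whether `θ` lies within angular
distance `arcsin |λ|` of `arg λ`; then `∫₀^{2π} σ_λ(θ) e^{iθ} dθ = 4λ`. Cutting `[0, 2π]` at the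
finitely many jumps of `σ_{ε₀}, …, σ_{ε_N}` writes a disk-valued sequence as `ε = ∑ⱼ cⱼ sⱼ` with
`±1`-valued `sⱼ` and `∑ⱼ |cⱼ| ≤ π / 2`. For distinct `a, b ∈ A` every `±1`-valued `s` equals
`(εᵃ - εᵇ) / (a - b)` for two `A`-valued sequences `εᵃ, εᵇ`, so by linearity of the martingale
transform in `ε` a disk-valued transform costs at most `(π / 2) · 2 β / |a - b|`.
The bound by `sup_{a ∈ A} |a|` comes from a constant martingale.
-/

open Real Complex

noncomputable def arcSign (c θ : ℝ) : ℝ := if Real.cos c < Real.cos θ then 1 else -1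

lemma arcSign_eq_one_or_eq_neg_one (c θ : ℝ) : arcSign c θ = 1 ∨ arcSign c θ = -1 := by
  unfold arcSign; split_ifs <;> simp

lemma abs_arcSign (c θ : ℝ) : |arcSign c θ| = 1 := by
  rcases arcSign_eq_one_or_eq_neg_one c θ with h | h <;> simp [h]

lemma measurable_arcSign (c : ℝ) : Measurable (arcSign c) :=
  Measurable.ite (measurableSet_lt measurable_const Real.continuous_cos.measurable)
    measurable_const measurable_const

lemma intervalIntegrable_ofReal_mul_exp_mul_I {g : ℝ → ℝ} (hg : Measurable g)
    (hg_le : ∀ θ, |g θ| ≤ 1) (a b : ℝ) :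
    IntervalIntegrable (fun θ : ℝ => (g θ : ℂ) * Complex.exp (I * θ)) volume a b := by
  refine (intervalIntegrable_const (c := (1 : ℝ))).mono_fun' (by fun_prop) ?_
  filter_upwards with θ
  rw [norm_mul, mul_comm I, Complex.norm_exp_ofReal_mul_I, Complex.norm_real, Real.norm_eq_abs,
    mul_one]
  exact hg_le θ

lemma intervalIntegral.integral_ofReal_mul_of_eqOn_Ioo {g : ℝ → ℝ} {f : ℝ → ℂ} {u v s : ℝ}
    (huv : u ≤ v) (hg : EqOn g (fun _ => s) (Ioo u v)) :
    ∫ θ in u..v, (g θ : ℂ) * f θ = s * ∫ θ in u..v, f θ := by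
  rw [intervalIntegral.integral_of_le huv, intervalIntegral.integral_of_le huv,
    ← MeasureTheory.integral_const_mul, integral_Ioc_eq_integral_Ioo, integral_Ioc_eq_integral_Ioo]
  exact setIntegral_congr_fun measurableSet_Ioo fun θ hθ => by rw [hg hθ]

lemma integral_arcSign_mul_exp {c : ℝ} (hc₀ : 0 ≤ c) (hcπ : c ≤ π) :
    ∫ θ in (-π)..π, (arcSign c θ : ℂ) * Complex.exp (I * θ) = 4 * Real.sin c := by
  have hint := intervalIntegrable_ofReal_mul_exp_mul_I (measurable_arcSign c)
    fun θ => (abs_arcSign c θ).le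
  have outer : ∀ θ, c ≤ |θ| → |θ| ≤ π → arcSign c θ = -1 := fun θ h₁ h₂ => by
    have := Real.cos_le_cos_of_nonneg_of_le_pi hc₀ h₂ h₁
    rw [Real.cos_abs] at this
    simp [arcSign, not_lt.2 this]
  have inner : ∀ θ, |θ| < c → arcSign c θ = 1 := fun θ h => by
    have := Real.cos_lt_cos_of_nonneg_of_le_pi (abs_nonneg θ) hcπ h
    rw [Real.cos_abs] at this
    simp [arcSign, this]
  rw [← intervalIntegral.integral_add_adjacent_intervals (hint (-π) (-c)) (hint (-c) π),
    ← intervalIntegral.integral_add_adjacent_intervals (hint (-c) c) (hint c π),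
    intervalIntegral.integral_ofReal_mul_of_eqOn_Ioo (s := -1) (by linarith)
      fun θ hθ => outer θ (by rw [abs_of_neg (by linarith [hθ.2])]; linarith [hθ.2])
        (by rw [abs_of_neg (by linarith [hθ.2])]; linarith [hθ.1]),
    intervalIntegral.integral_ofReal_mul_of_eqOn_Ioo (s := 1) (by linarith)
      fun θ hθ => inner θ (abs_lt.2 hθ),
    intervalIntegral.integral_ofReal_mul_of_eqOn_Ioo (s := -1) hcπ
      fun θ hθ => outer θ (by rw [abs_of_pos (by linarith [hθ.1])]; exact hθ.1.le)
        (by rw [abs_of_pos (by linarith [hθ.1])]; exact hθ.2.le)]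
  simp only [integral_exp_mul_complex I_ne_zero]
  simp only [mul_comm I, Complex.exp_mul_I]
  push_cast
  simp only [Complex.cos_neg, Complex.sin_neg, Complex.cos_pi, ← Complex.ofReal_sin,
    Real.sin_pi, Complex.ofReal_zero]
  field_simp
  ring

noncomputable def diskSign (l : ℂ) (θ : ℝ) : ℝ := arcSign (arcsin ‖l‖) (θ - arg l)

lemma intervalIntegrable_diskSign_mul_exp (l : ℂ) (a b : ℝ) :
    IntervalIntegrable (fun θ : ℝ => (diskSign l θ : ℂ) * Complex.exp (I * θ)) volume a b :=
  intervalIntegrable_ofReal_mul_exp_mul_I ((measurable_arcSign _).comp (measurable_id.sub_const _))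
    (fun _ => (abs_arcSign _ _).le) a b

lemma integral_diskSign_mul_exp {l : ℂ} (hl : ‖l‖ ≤ 1) :
    ∫ θ in (0)..(2 * π), (diskSign l θ : ℂ) * Complex.exp (I * θ) = 4 * l := by
  set g : ℝ → ℂ := fun u => (arcSign (arcsin ‖l‖) u : ℂ) * Complex.exp (I * u)
  have hg : Function.Periodic g (2 * π) := fun u => by
    simp only [g, arcSign, Real.cos_add_two_pi]
    push_cast
    rw [mul_add, Complex.exp_add, mul_comm I (2 * π), Complex.exp_two_pi_mul_I, mul_one]
  have shift : ∫ θ in (0)..(2 * π), (diskSign l θ : ℂ) * Complex.exp (I * θ)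
      = Complex.exp (I * arg l) * ∫ u in (-arg l)..(-arg l + 2 * π), g u := by
    rw [← intervalIntegral.integral_const_mul, show -arg l = 0 - arg l by ring,
      show 0 - arg l + 2 * π = 2 * π - arg l by ring,
      ← intervalIntegral.integral_comp_sub_right]
    refine intervalIntegral.integral_congr fun θ _ => ?_
    simp only [g, diskSign]
    rw [mul_left_comm, ← Complex.exp_add]
    push_cast
    ring_nf
  rw [shift, hg.intervalIntegral_add_eq (-arg l) (-π), neg_add_eq_sub,
    show 2 * π - π = π by ring, integral_arcSign_mul_exp (arcsin_nonneg.2 (norm_nonneg l))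
      ((arcsin_le_pi_div_two _).trans (by linarith [pi_pos])),
    Real.sin_arcsin (by linarith [norm_nonneg l]) hl, mul_comm I]
  linear_combination (4 : ℂ) * Complex.norm_mul_exp_arg_mul_I l

lemma mem_of_cos_sub_eq_cos {φ c x : ℝ} (hφ : φ ∈ Ioc (-π) π) (hc : c ∈ Ico 0 π)
    (hx : x ∈ Icc 0 (2 * π)) (h : Real.cos (x - φ) = Real.cos c) :
    x ∈ ({φ + c, φ - c, φ + c + 2 * π, φ - c + 2 * π} : Finset ℝ) := by
  have hπ := pi_pos
  obtain ⟨hφ₁, hφ₂⟩ := hφ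
  obtain ⟨hc₁, hc₂⟩ := hc
  obtain ⟨hx₁, hx₂⟩ := hx
  simp only [Finset.mem_insert, Finset.mem_singleton]
  obtain ⟨k, hk | hk⟩ := Real.cos_eq_cos_iff.1 h
  · have hk₁ : (k : ℝ) < 1 := by nlinarith
    have hk₂ : (-2 : ℝ) < k := by nlinarith
    obtain rfl | rfl : k = -1 ∨ k = 0 := by
      have : k < 1 := by exact_mod_cast hk₁
      have : -2 < k := by exact_mod_cast hk₂
      omega
    · push_cast at hk; right; right; left; linarith
    · push_cast at hk; left; linarith
  · have hk₁ : (k : ℝ) < 2 := by nlinarith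
    have hk₂ : (-1 : ℝ) < k := by nlinarith
    obtain rfl | rfl : k = 0 ∨ k = 1 := by
      have : k < 2 := by exact_mod_cast hk₁
      have : -1 < k := by exact_mod_cast hk₂
      omega
    · push_cast at hk; right; left; linarith
    · push_cast at hk; right; right; right; linarith

-- The `+ 2π` copies are needed because `arg l ∈ (-π, π]` while the jumps are sought in `[0, 2π]`.
noncomputable def diskSignJumps (l : ℂ) : Finset ℝ :=
  {arg l + arcsin ‖l‖, arg l - arcsin ‖l‖, arg l + arcsin ‖l‖ + 2 * π,
    arg l - arcsin ‖l‖ + 2 * π}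

lemma pos_iff_pos_of_forall_ne_zero {h : ℝ → ℝ} {s : Set ℝ} (hs : s.OrdConnected)
    (hh : ContinuousOn h s) (hz : ∀ t ∈ s, h t ≠ 0) {x y : ℝ} (hx : x ∈ s) (hy : y ∈ s) :
    0 < h x ↔ 0 < h y := by
  have key : ∀ x ∈ s, ∀ y ∈ s, 0 < h x → 0 < h y := fun x hx y hy hpos => by
    by_contra! hneg
    obtain ⟨z, hz_mem, hz_zero⟩ := intermediate_value_uIcc (hh.mono (hs.uIcc_subset hx hy))
      (Set.mem_uIcc.2 (Or.inr ⟨hneg, hpos.le⟩))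
    exact hz z (hs.uIcc_subset hx hy hz_mem) hz_zero
  exact ⟨key x hx y hy, key y hy x hx⟩

lemma diskSign_eq_of_forall_notMem_diskSignJumps (l : ℂ) {u v : ℝ} (hu : 0 ≤ u)
    (hv : v ≤ 2 * π) (hjumps : ∀ t ∈ Ioo u v, t ∉ diskSignJumps l) {x y : ℝ}
    (hx : x ∈ Ioo u v) (hy : y ∈ Ioo u v) : diskSign l x = diskSign l y := by
  have hc : arcsin ‖l‖ ∈ Ico 0 π :=
    ⟨arcsin_nonneg.2 (norm_nonneg l), (arcsin_le_pi_div_two _).trans_lt (by linarith [pi_pos])⟩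
  have key := pos_iff_pos_of_forall_ne_zero
    (h := fun t => Real.cos (t - arg l) - Real.cos (arcsin ‖l‖)) ordConnected_Ioo
    (by fun_prop) (fun t ht h0 => hjumps t ht <| mem_of_cos_sub_eq_cos
      ⟨neg_pi_lt_arg l, arg_le_pi l⟩ hc ⟨hu.trans ht.1.le, ht.2.le.trans hv⟩ (sub_eq_zero.1 h0))
    hx hy
  simp only [sub_pos] at key
  simp only [diskSign, arcSign, key]

lemma exists_partition_of_finset {P : Finset ℝ} {u v : ℝ} (hu : u ∈ P) (hv : v ∈ P)
    (hP : ∀ x ∈ P, x ∈ Icc u v) :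
    ∃ (m : ℕ) (a : ℕ → ℝ), a 0 = u ∧ a m = v ∧ (∀ j < m, a j < a (j + 1)) ∧
      (∀ j ≤ m, a j ∈ P) ∧ ∀ j < m, ∀ x ∈ Ioo (a j) (a (j + 1)), x ∉ P := by
  set L := P.sort
  have hsorted : L.SortedLT := P.sortedLT_sort
  have hlen : 0 < L.length := by
    rw [Finset.length_sort]; exact Finset.card_pos.2 ⟨u, hu⟩
  have hget : ∀ j (hj : j < L.length), L.getD j 0 = L[j] := fun j hj => by
    simp [List.getD_eq_getElem?_getD, hj]
  refine ⟨L.length - 1, fun j => L.getD j 0, ?_, ?_, ?_, ?_, ?_⟩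
  · dsimp only
    rw [hget 0 hlen, Finset.sorted_zero_eq_min']
    exact le_antisymm (Finset.min'_le _ _ hu) (Finset.le_min' _ _ _ fun y hy => (hP y hy).1)
  · dsimp only
    rw [hget _ (by omega), Finset.sorted_last_eq_max']
    exact le_antisymm (Finset.max'_le _ _ _ fun y hy => (hP y hy).2) (Finset.le_max' _ _ hv)
  · intro j hj
    dsimp only
    rw [hget j (by omega), hget (j + 1) (by omega), hsorted.getElem_lt_getElem_iff]
    omega
  · intro j hj
    dsimp only
    rw [hget j (by omega)]
    exact (Finset.mem_sort _).1 (L.getElem_mem _)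
  · intro j hj x hx hxP
    obtain ⟨i, hi, rfl⟩ : ∃ (i : ℕ) (hi : i < L.length), L[i] = x :=
      List.getElem_of_mem ((Finset.mem_sort (· ≤ ·)).2 hxP)
    dsimp only at hx
    rw [hget j (by omega), hget (j + 1) (by omega), mem_Ioo, hsorted.getElem_lt_getElem_iff,
      hsorted.getElem_lt_getElem_iff] at hx
    omega

lemma exists_partition_diskSign_eq (N : ℕ) (l : ℕ → ℂ) :
    ∃ (m : ℕ) (a : ℕ → ℝ), a 0 = 0 ∧ a m = 2 * π ∧ (∀ j < m, a j < a (j + 1)) ∧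
      ∀ j < m, ∀ n ≤ N,
        EqOn (diskSign (l n)) (fun _ => diskSign (l n) ((a j + a (j + 1)) / 2))
          (Ioo (a j) (a (j + 1))) := by
  have hπ := pi_pos
  set P : Finset ℝ := insert 0 (insert (2 * π)
    (((Finset.range (N + 1)).biUnion (diskSignJumps ∘ l)).filter (· ∈ Icc 0 (2 * π))))
  have hP : ∀ x ∈ P, x ∈ Icc 0 (2 * π) := by
    simp only [P, Finset.mem_insert, Finset.mem_filter]
    rintro x (rfl | rfl | ⟨-, hx⟩)
    exacts [⟨le_rfl, by linarith⟩, ⟨by linarith, le_rfl⟩, hx]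
  obtain ⟨m, a, ha₀, ham, hmono, haP, hgap⟩ :=
    exists_partition_of_finset (by simp [P]) (by simp [P]) hP
  refine ⟨m, a, ha₀, ham, hmono, fun j hj n hn x hx => ?_⟩
  have hu := (hP _ (haP j hj.le)).1
  have hv := (hP _ (haP (j + 1) hj)).2
  refine diskSign_eq_of_forall_notMem_diskSignJumps (l n) hu hv (fun t ht htj => ?_) hx
    ⟨by linarith [hmono j hj], by linarith [hmono j hj]⟩
  refine hgap j hj t ht ?_
  simp only [P, Finset.mem_insert, Finset.mem_filter, Finset.mem_biUnion, Finset.mem_range]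
  exact Or.inr (Or.inr ⟨⟨n, by omega, htj⟩, hu.trans ht.1.le, ht.2.le.trans hv⟩)

lemma norm_integral_exp_mul_I_le (u v : ℝ) :
    ‖∫ θ in u..v, Complex.exp (I * θ)‖ ≤ |v - u| := by
  simpa using intervalIntegral.norm_integral_le_of_norm_le_const (C := 1) fun θ _ => by
    rw [mul_comm, Complex.norm_exp_ofReal_mul_I]

theorem exists_sign_decomposition (N : ℕ) (l : ℕ → ℂ) (hl : ∀ n, ‖l n‖ ≤ 1) :
    ∃ (m : ℕ) (c : ℕ → ℂ) (s : ℕ → ℕ → ℝ), (∀ j n, s j n = 1 ∨ s j n = -1) ∧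
      ∑ j ∈ Finset.range m, ‖c j‖ ≤ π / 2 ∧
      ∀ n ≤ N, ∑ j ∈ Finset.range m, c j * s j n = l n := by
  obtain ⟨m, a, ha₀, ham, hmono, hconst⟩ := exists_partition_diskSign_eq N l
  refine ⟨m, fun j => (∫ θ in a j..a (j + 1), Complex.exp (I * θ)) / 4,
    fun j n => diskSign (l n) ((a j + a (j + 1)) / 2),
    fun j n => arcSign_eq_one_or_eq_neg_one _ _, ?_, fun n hn => ?_⟩
  · calc ∑ j ∈ Finset.range m, ‖(∫ θ in a j..a (j + 1), Complex.exp (I * θ)) / 4‖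
        ≤ ∑ j ∈ Finset.range m, (a (j + 1) - a j) / 4 := by
          refine Finset.sum_le_sum fun j hj => ?_
          rw [norm_div, Complex.norm_ofNat,
            ← abs_of_pos (sub_pos.2 (hmono j (Finset.mem_range.1 hj)))]
          gcongr
          exact norm_integral_exp_mul_I_le _ _
      _ = π / 2 := by
          rw [← Finset.sum_div, Finset.sum_range_sub, ha₀, ham]
          ring
  · have hpiece : ∀ j ∈ Finset.range m,
        (∫ θ in a j..a (j + 1), Complex.exp (I * θ)) / 4 *
          (diskSign (l n) ((a j + a (j + 1)) / 2) : ℂ)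
        = (∫ θ in a j..a (j + 1), (diskSign (l n) θ : ℂ) * Complex.exp (I * θ)) / 4 :=
      fun j hj => by
        rw [intervalIntegral.integral_ofReal_mul_of_eqOn_Ioo
          (hmono j (Finset.mem_range.1 hj)).le (hconst j (Finset.mem_range.1 hj) n hn)]
        ring
    rw [Finset.sum_congr rfl hpiece, ← Finset.sum_div,
      intervalIntegral.sum_integral_adjacent_intervals fun k _ =>
        intervalIntegrable_diskSign_mul_exp (l n) _ _,
      ha₀, ham, integral_diskSign_mul_exp (hl n)]
    ring

section Transform

variable {Ω X : Type} [NormedAddCommGroup X] [NormedSpace ℂ X] {m : MeasurableSpace Ω}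
  {μ : Measure Ω}

noncomputable def martingaleTransform (ε : ℕ → ℂ) (f : ℕ → Ω → X) (N : ℕ) (ω : Ω) : X :=
  ∑ k ∈ Finset.range (N + 1), ε k • mdiff f k ω

lemma aestronglyMeasurable_martingaleTransform {f : ℕ → Ω → X}
    (hf : ∀ n, AEStronglyMeasurable (f n) μ) (ε : ℕ → ℂ) (N : ℕ) :
    AEStronglyMeasurable (martingaleTransform ε f N) μ := by
  refine Finset.aestronglyMeasurable_fun_sum _ fun k _ => AEStronglyMeasurable.const_smul ?_ _
  unfold mdiff
  split_ifs
  exacts [hf 0, (hf k).sub (hf (k - 1))]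

lemma martingaleTransform_eq_sum {ι : Type} {t : Finset ι} {ε : ℕ → ℂ} {c : ι → ℂ}
    {δ : ι → ℕ → ℂ} {f : ℕ → Ω → X} {N : ℕ} (h : ∀ n ≤ N, ε n = ∑ j ∈ t, c j * δ j n) :
    martingaleTransform ε f N = ∑ j ∈ t, c j • martingaleTransform (δ j) f N := by
  ext ω
  simp only [martingaleTransform, Finset.sum_apply, Pi.smul_apply, Finset.smul_sum, smul_smul]
  rw [Finset.sum_comm]
  refine Finset.sum_congr rfl fun k hk => ?_
  rw [h k (Nat.lt_succ_iff.1 (Finset.mem_range.1 hk)), Finset.sum_smul]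

lemma eLpNorm_martingaleTransform_le_of_eq_sum {ι : Type} {t : Finset ι} {ε : ℕ → ℂ}
    {c : ι → ℂ} {δ : ι → ℕ → ℂ} {f : ℕ → Ω → X} {N : ℕ} {q C : ℝ≥0∞} (hq : 1 ≤ q)
    (hf : ∀ n, AEStronglyMeasurable (f n) μ) (h : ∀ n ≤ N, ε n = ∑ j ∈ t, c j * δ j n)
    (hδ : ∀ j ∈ t, eLpNorm (martingaleTransform (δ j) f N) q μ ≤ C) :
    eLpNorm (martingaleTransform ε f N) q μ ≤ (∑ j ∈ t, ‖c j‖ₑ) * C := by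
  rw [martingaleTransform_eq_sum h, Finset.sum_mul]
  refine (eLpNorm_sum_le (fun j _ =>
    (aestronglyMeasurable_martingaleTransform hf _ _).const_smul _) hq).trans ?_
  refine Finset.sum_le_sum fun j hj => ?_
  rw [eLpNorm_const_smul]
  exact mul_le_mul_right (hδ j hj) _

end Transform

section UMD

variable {X : Type} [NormedAddCommGroup X] [NormedSpace ℂ X] [NormedSpace ℝ X] [CompleteSpace X]
  {p : ℝ} {A : Set ℂ} {β : ℝ≥0∞}

lemma UMDAdmissible.eLpNorm_martingaleTransform_sign_le (hp : 1 ≤ p)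
    (hβ : UMDAdmissible ℂ X p A β) {a b : ℂ} (ha : a ∈ A) (hb : b ∈ A) (hab : a ≠ b)
    {Ω : Type} {m : MeasurableSpace Ω} {μ : Measure Ω} [IsProbabilityMeasure μ]
    {ℱ : Filtration ℕ m} {f : ℕ → Ω → X} (hf : Martingale f ℱ μ)
    (hfp : ∀ n, MemLp (f n) (ENNReal.ofReal p) μ) (N : ℕ) {s : ℕ → ℝ}
    (hs : ∀ n, s n = 1 ∨ s n = -1) :
    eLpNorm (martingaleTransform (fun n => (s n : ℂ)) f N) (ENNReal.ofReal p) μ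
      ≤ ENNReal.ofReal (2 / ‖a - b‖) * (β * eLpNorm (f N) (ENNReal.ofReal p) μ) := by
  have hab' : a - b ≠ 0 := sub_ne_zero.2 hab
  set εa : ℕ → ℂ := fun n => if s n = 1 then a else b
  set εb : ℕ → ℂ := fun n => if s n = 1 then b else a
  have hεa : ∀ n, εa n ∈ A := fun n => by simp only [εa]; split_ifs <;> assumption
  have hεb : ∀ n, εb n ∈ A := fun n => by simp only [εb]; split_ifs <;> assumption
  have hsign : ∀ n ≤ N, (s n : ℂ) = ∑ j, ![(a - b)⁻¹, -(a - b)⁻¹] j * ![εa, εb] j n :=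
    fun n _ => by
      rcases hs n with h | h <;> simp [εa, εb, h, (by norm_num : (-1 : ℝ) ≠ 1)] <;>
        field_simp <;> ring
  refine (eLpNorm_martingaleTransform_le_of_eq_sum (C := β * eLpNorm (f N) (ENNReal.ofReal p) μ)
    (ENNReal.one_le_ofReal.2 hp)
    (fun n => (hfp n).aestronglyMeasurable) hsign fun j _ => ?_).trans_eq ?_
  · fin_cases j
    exacts [hβ Ω m μ inferInstance ℱ f hf hfp N εa hεa, hβ Ω m μ inferInstance ℱ f hf hfp N εb hεb]
  · rw [Fin.sum_univ_two]
    simp only [Matrix.cons_val_zero, Matrix.cons_val_one, enorm_neg, ← two_mul]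
    rw [← ofReal_norm, norm_inv, ← ENNReal.ofReal_ofNat 2, ← ENNReal.ofReal_mul zero_le_two,
      div_eq_mul_inv]

lemma UMDAdmissible.closedBall (hp : 1 ≤ p) (hβ : UMDAdmissible ℂ X p A β) {a b : ℂ}
    (ha : a ∈ A) (hb : b ∈ A) (hab : a ≠ b) :
    UMDAdmissible ℂ X p (Metric.closedBall 0 1) (ENNReal.ofReal (π / ‖a - b‖) * β) := by
  intro Ω m μ _ ℱ f hf hfp N ε hε
  obtain ⟨n, c, s, hs, hc, hrepr⟩ := exists_sign_decomposition N ε fun k => by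
    simpa using hε k
  calc eLpNorm (martingaleTransform ε f N) (ENNReal.ofReal p) μ
      ≤ (∑ j ∈ Finset.range n, ‖c j‖ₑ)
          * (ENNReal.ofReal (2 / ‖a - b‖) * (β * eLpNorm (f N) (ENNReal.ofReal p) μ)) :=
        eLpNorm_martingaleTransform_le_of_eq_sum (ENNReal.one_le_ofReal.2 hp)
          (fun k => (hfp k).aestronglyMeasurable) (fun k hk => (hrepr k hk).symm)
          fun j _ => hβ.eLpNorm_martingaleTransform_sign_le hp ha hb hab hf hfp N (hs j)
    _ ≤ ENNReal.ofReal (π / 2)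
          * (ENNReal.ofReal (2 / ‖a - b‖) * (β * eLpNorm (f N) (ENNReal.ofReal p) μ)) := by
        gcongr
        simp_rw [← ofReal_norm]
        rw [← ENNReal.ofReal_sum_of_nonneg fun j _ => norm_nonneg _]
        exact ENNReal.ofReal_le_ofReal hc
    _ = ENNReal.ofReal (π / ‖a - b‖) * β * eLpNorm (f N) (ENNReal.ofReal p) μ := by
        rw [← mul_assoc, ← ENNReal.ofReal_mul (by positivity), ← mul_assoc]
        congr 3
        field_simp

lemma UMDAdmissible.nnnorm_le [Nontrivial X] (hp : 0 < p) (hβ : UMDAdmissible ℂ X p A β)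
    {a : ℂ} (ha : a ∈ A) : (‖a‖₊ : ℝ≥0∞) ≤ β := by
  obtain ⟨x, hx⟩ := exists_ne (0 : X)
  have key := hβ Unit ⊤ (Measure.dirac ()) inferInstance (Filtration.const ℕ ⊤ le_rfl)
    (fun _ _ => x) (martingale_const _ _ x) (fun _ => memLp_const x) 0 (fun _ => a) fun _ => ha
  have hq : ENNReal.ofReal p ≠ 0 := (ENNReal.ofReal_pos.2 hp).ne'
  simp only [zero_add, Finset.range_one, Finset.sum_singleton, mdiff, if_true] at key
  rw [eLpNorm_const _ hq (NeZero.ne _), eLpNorm_const _ hq (NeZero.ne _), enorm_smul] at key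
  simp only [measure_univ, ENNReal.one_rpow, mul_one] at key
  exact (ENNReal.mul_le_mul_iff_left (by simpa using hx) enorm_ne_top).1 key

lemma edist_mul_umdConst_closedBall_le (hp : 1 ≤ p) (hβ : UMDAdmissible ℂ X p A β) {a b : ℂ}
    (ha : a ∈ A) (hb : b ∈ A) :
    ENNReal.ofReal (1 / π) * edist a b * umdConst ℂ X p (Metric.closedBall 0 1) ≤ β := by
  rcases eq_or_ne a b with rfl | hab
  · simp
  have hab' : 0 < ‖a - b‖ := norm_pos_iff.2 (sub_ne_zero.2 hab)
  calc ENNReal.ofReal (1 / π) * edist a b * umdConst ℂ X p (Metric.closedBall 0 1)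
      ≤ ENNReal.ofReal (1 / π) * edist a b * (ENNReal.ofReal (π / ‖a - b‖) * β) := by
        gcongr
        exact sInf_le (hβ.closedBall hp ha hb hab)
    _ = β := by
        rw [edist_dist, Complex.dist_eq, ← mul_assoc, ← ENNReal.ofReal_mul (by positivity),
          ← ENNReal.ofReal_mul (by positivity)]
        field_simp
        simp

lemma ediam_mul_umdConst_closedBall_le (hp : 1 ≤ p) (A : Set ℂ) :
    ENNReal.ofReal (1 / π) * Metric.ediam A * umdConst ℂ X p (Metric.closedBall 0 1)
      ≤ umdConst ℂ X p A := by
  refine le_sInf fun β hβ => ?_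
  simp only [Metric.ediam, ENNReal.mul_iSup, ENNReal.iSup_mul]
  exact iSup₂_le fun a ha => iSup₂_le fun b hb => edist_mul_umdConst_closedBall_le hp hβ ha hb

lemma iSup_nnnorm_le_umdConst [Nontrivial X] (hp : 0 < p) (A : Set ℂ) :
    ⨆ a ∈ A, (‖a‖₊ : ℝ≥0∞) ≤ umdConst ℂ X p A :=
  le_sInf fun _ hβ => iSup₂_le fun _ ha => hβ.nnnorm_le hp ha

end UMD

theorem umdConst_lower_bound_general (X : Type) [NormedAddCommGroup X]
    [NormedSpace ℂ X] [NormedSpace ℝ X] [CompleteSpace X] [Nontrivial X]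
    (p : ℝ) (hp : 1 < p) (A : Set ℂ) :
    max (ENNReal.ofReal (1 / Real.pi) * EMetric.diam A *
        umdConst ℂ X p (Metric.closedBall (0 : ℂ) 1))
      (⨆ a ∈ A, (‖a‖₊ : ℝ≥0∞)) ≤ umdConst ℂ X p A :=
  max_le (ediam_mul_umdConst_closedBall_le hp.le A) (iSup_nnnorm_le_umdConst (by linarith) A)

theorem umdConst_lower_bound (X : Type) [NormedAddCommGroup X]
    [NormedSpace ℂ X] [NormedSpace ℝ X] [CompleteSpace X] [Nontrivial X]
    (p : ℝ) (hp : 1 < p) (A : Set ℂ) (hA : Bornology.IsBounded A) :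
    max (ENNReal.ofReal (1 / Real.pi) * EMetric.diam A *
        umdConst ℂ X p (Metric.closedBall (0 : ℂ) 1))
      (⨆ a ∈ A, (‖a‖₊ : ℝ≥0∞)) ≤ umdConst ℂ X p A :=
  umdConst_lower_bound_general X p hp A
end

section
/- Let X be a Banach space, 1<p<∞, A ⊆ K convex, closed, bounded, containing at least two points, and let a₁, a₂ ∈ A be distinct. Suppose U : X × X → ℝ is such that z ↦ U(x+z, y+εz) is concave in z for each x, y ∈ X and each ε ∈ A. Define V(x,y) := U((x−y)/2, (a₂x − a₁y)/2). Then V is biconcave, i.e. x ↦ V(x,y) and y ↦ V(x,y) are each concave. -/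
open MeasureTheory Filter Set
open scoped ENNReal NNReal Topology

lemma ConcaveOn.comp_smul_univ {𝕜 E β : Type*} [CommSemiring 𝕜] [PartialOrder 𝕜]
    [AddCommMonoid E] [Module 𝕜 E] [AddCommMonoid β] [PartialOrder β] [SMul 𝕜 β] {f : E → β}
    (hf : ConcaveOn 𝕜 Set.univ f) (r : 𝕜) : ConcaveOn 𝕜 Set.univ (fun x => f (r • x)) :=
  hf.comp_linearMap (LinearMap.lsmul 𝕜 E r)

-- No `SMulCommClass R α E` is needed: `2⁻¹` commutes with every additive map.
lemma inv_two_smul_comm {R α E : Type*} [DivisionSemiring R] [AddCommMonoid E] [Module R E]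
    [DistribSMul α E] (s : α) (x : E) : (2 : R)⁻¹ • s • x = s • (2 : R)⁻¹ • x := by
  exact_mod_cast inv_natCast_smul_comm R 2 s x

theorem biconcave_V_general (𝕜 : Type) [RCLike 𝕜] (X : Type) [NormedAddCommGroup X]
    [NormedSpace 𝕜 X] [NormedSpace ℝ X]
    (A : Set 𝕜)
    (a₁ a₂ : 𝕜) (ha₁ : a₁ ∈ A) (ha₂ : a₂ ∈ A)
    (U : X × X → ℝ)
    (hU : ∀ (x y : X), ∀ ε ∈ A,
      ConcaveOn ℝ Set.univ (fun z : X => U (x + z, y + ε • z))) :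
    (∀ y : X, ConcaveOn ℝ Set.univ
      (fun x : X => U ((2 : ℝ)⁻¹ • (x - y), (2 : ℝ)⁻¹ • (a₂ • x - a₁ • y)))) ∧
    (∀ x : X, ConcaveOn ℝ Set.univ
      (fun y : X => U ((2 : ℝ)⁻¹ • (x - y), (2 : ℝ)⁻¹ • (a₂ • x - a₁ • y)))) := by
  -- In `x`, `V` moves along the direction `(1, a₂)`; in `y`, along `(1, a₁)`.
  refine ⟨fun y => ?_, fun x => ?_⟩
  · refine ((hU (-(2 : ℝ)⁻¹ • y) (-(2 : ℝ)⁻¹ • a₁ • y) a₂ ha₂).comp_smul_univ (2 : ℝ)⁻¹).congr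
      fun x _ => ?_
    simp only [smul_sub, neg_smul, inv_two_smul_comm]
    abel_nf
  · refine ((hU ((2 : ℝ)⁻¹ • x) ((2 : ℝ)⁻¹ • a₂ • x) a₁ ha₁).comp_smul_univ (-(2 : ℝ)⁻¹)).congr
      fun y _ => ?_
    simp only [smul_sub, neg_smul, smul_neg, inv_two_smul_comm]
    abel_nf

theorem biconcave_V (𝕜 : Type) [RCLike 𝕜] (X : Type) [NormedAddCommGroup X]
    [NormedSpace 𝕜 X] [NormedSpace ℝ X]
    (A : Set 𝕜) (hconv : Convex ℝ A) (hclosed : IsClosed A)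
    (hbdd : Bornology.IsBounded A)
    (a₁ a₂ : 𝕜) (ha₁ : a₁ ∈ A) (ha₂ : a₂ ∈ A) (hne : a₁ ≠ a₂)
    (U : X × X → ℝ)
    (hU : ∀ (x y : X), ∀ ε ∈ A,
      ConcaveOn ℝ Set.univ (fun z : X => U (x + z, y + ε • z))) :
    (∀ y : X, ConcaveOn ℝ Set.univ
      (fun x : X => U ((2 : ℝ)⁻¹ • (x - y), (2 : ℝ)⁻¹ • (a₂ • x - a₁ • y)))) ∧
    (∀ x : X, ConcaveOn ℝ Set.univ
      (fun y : X => U ((2 : ℝ)⁻¹ • (x - y), (2 : ℝ)⁻¹ • (a₂ • x - a₁ • y)))) :=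
  biconcave_V_general 𝕜 X A a₁ a₂ ha₁ ha₂ U hU
end

section
/- Let X be a Banach space, A ⊆ K convex, closed, bounded, containing distinct points a₁, a₂, and let U : X×X → ℝ be such that z ↦ U(x+z, y+εz) is concave in z ∈ X for all x, y ∈ X and ε ∈ A, with U(x, ax) ≤ 0 for all x ∈ X and a ∈ A (satisfied since x ↦ U(x,ax) is symmetric concave with U(0,0) ≤ 0). Define V(x,y) := U((x−y)/2, (a₂x − a₁y)/2). Then for every c₁, c₂ ∈ K with c₁ ≠ c₂ and (a₂c₁ − a₁c₂)/(c₁ − c₂) ∈ A, and every x, y ∈ X, the map z ↦ V(x + c₁z, y + c₂z) is concave in z ∈ X. -/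
open MeasureTheory Filter Set
open scoped ENNReal NNReal Topology

/-!
With `ε := (a₂c₁ - a₁c₂)/(c₁ - c₂) ∈ A` and `w := (c₁ - c₂)z/2`, the point at which `U` is evaluated
is `((x - y)/2 + w, (a₂x - a₁y)/2 + εw)`, so the map is the concave function
`w ↦ U((x - y)/2 + w, (a₂x - a₁y)/2 + εw)` composed with `z ↦ w`. The latter is `ℝ`-linear even
though no scalar tower `ℝ → 𝕜 → X` is assumed, because it is additive and continuous.
-/

theorem smul_real_smul_comm {S X : Type*} [AddCommGroup X] [Module ℝ X]
    [TopologicalSpace X] [ContinuousSMul ℝ X] [T2Space X] [DistribSMul S X]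
    [ContinuousConstSMul S X] (c : S) (r : ℝ) (v : X) :
    c • r • v = r • c • v :=
  map_real_smul (DistribSMul.toAddMonoidHom X c) (continuous_const_smul c) r v

theorem smul_line_sub_smul_line {R M : Type*} [CommRing R] [AddCommGroup M] [Module R M]
    {a₁ a₂ c₁ c₂ ε : R} (hε : ε * (c₁ - c₂) = a₂ * c₁ - a₁ * c₂) (x y z : M) :
    a₂ • (x + c₁ • z) - a₁ • (y + c₂ • z) = a₂ • x - a₁ • y + ε • (c₁ - c₂) • z := by
  rw [smul_smul, hε, sub_smul, smul_add, smul_add, smul_smul, smul_smul]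
  abel

theorem concave_V_along_lines_general (𝕜 : Type) [RCLike 𝕜] (X : Type) [NormedAddCommGroup X]
    [NormedSpace 𝕜 X] [NormedSpace ℝ X]
    (A : Set 𝕜)
    (a₁ a₂ : 𝕜)
    (U : X × X → ℝ)
    (hU : ∀ (x y : X), ∀ ε ∈ A,
      ConcaveOn ℝ Set.univ (fun z : X => U (x + z, y + ε • z))) :
    ∀ c₁ c₂ : 𝕜, c₁ ≠ c₂ → (a₂ * c₁ - a₁ * c₂) / (c₁ - c₂) ∈ A →
    ∀ x y : X, ConcaveOn ℝ Set.univ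
      (fun z : X => U ((2 : ℝ)⁻¹ • (x + c₁ • z - (y + c₂ • z)),
        (2 : ℝ)⁻¹ • (a₂ • (x + c₁ • z) - a₁ • (y + c₂ • z)))) := by
  intro c₁ c₂ hc hε x y
  set ε := (a₂ * c₁ - a₁ * c₂) / (c₁ - c₂)
  have hεc : ε * (c₁ - c₂) = a₂ * c₁ - a₁ * c₂ := div_mul_cancel₀ _ (sub_ne_zero.mpr hc)
  let L : X →L[ℝ] X := (2⁻¹ : ℝ) •
    (DistribSMul.toAddMonoidHom X (c₁ - c₂)).toRealLinearMap (continuous_const_smul _)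
  have hconc := (hU ((2 : ℝ)⁻¹ • (x - y)) ((2 : ℝ)⁻¹ • (a₂ • x - a₁ • y)) ε hε).comp_linearMap
    L.toLinearMap
  rw [Set.preimage_univ] at hconc
  convert hconc using 2 with z
  have hdiff : x + c₁ • z - (y + c₂ • z) = x - y + (c₁ - c₂) • z := by
    rw [sub_smul]; abel
  rw [hdiff, smul_line_sub_smul_line hεc, smul_add, smul_add, ← smul_real_smul_comm ε]
  rfl

theorem concave_V_along_lines (𝕜 : Type) [RCLike 𝕜] (X : Type) [NormedAddCommGroup X]
    [NormedSpace 𝕜 X] [NormedSpace ℝ X]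
    (A : Set 𝕜) (hconv : Convex ℝ A) (hclosed : IsClosed A)
    (hbdd : Bornology.IsBounded A)
    (a₁ a₂ : 𝕜) (ha₁ : a₁ ∈ A) (ha₂ : a₂ ∈ A) (hne : a₁ ≠ a₂)
    (U : X × X → ℝ)
    (hU : ∀ (x y : X), ∀ ε ∈ A,
      ConcaveOn ℝ Set.univ (fun z : X => U (x + z, y + ε • z)))
    (hU0 : ∀ (x : X), ∀ a ∈ A, U (x, a • x) ≤ 0) :
    ∀ c₁ c₂ : 𝕜, c₁ ≠ c₂ → (a₂ * c₁ - a₁ * c₂) / (c₁ - c₂) ∈ A →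
    ∀ x y : X, ConcaveOn ℝ Set.univ
      (fun z : X => U ((2 : ℝ)⁻¹ • (x + c₁ • z - (y + c₂ • z)),
        (2 : ℝ)⁻¹ • (a₂ • (x + c₁ • z) - a₁ • (y + c₂ • z)))) :=
  concave_V_along_lines_general 𝕜 X A a₁ a₂ U hU
end

section
/- Let U : X × X → ℝ ∪ {+∞} satisfy: (a) z ↦ U(x+z, y+εz) is concave in z ∈ X for all x, y ∈ X and all ε ∈ A, and (b) U(x, ax) ≤ 0 for all x ∈ X and all a ∈ A, where A ⊆ K contains two distinct points a₁, a₂. Then U(x,y) < ∞ for all x, y ∈ X. More precisely, with z = (a₂x − y)/(a₂ − a₁) and u = (a₁x − y)/(a₁ − a₂), one has U(x,y) + U(z−u, a₁z − a₂u) ≤ 2U(z, a₁z) ≤ 0, hence both summands on the left are finite (in ℝ). -/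
open MeasureTheory Filter Set
open scoped ENNReal NNReal Topology

/-!
Write `x = z + u` and `y = a₁ z + a₂ u`. Along the line through `(z, a₁ z)` in direction
`(u, a₂ u)` the function `U` is midpoint concave, so
`U(x, y) + U(z - u, a₁ z - a₂ u) ≤ 2 U(z, a₁ z)`, and the right-hand side is `≤ 0` because
`(z, a₁ z)` lies on the diagonal of slope `a₁ ∈ A`. Since `U` never takes the value `⊥`, a sum
of two values of `U` that is `≤ 0` has both summands finite.
-/

theorem add_eq_and_smul_add_smul_eq_of_ne {𝕜 X : Type*} [Field 𝕜] [AddCommGroup X]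
    [Module 𝕜 X] {a₁ a₂ : 𝕜} (hne : a₁ ≠ a₂) {x y z u : X} (hz : z = (a₂ - a₁)⁻¹ • (a₂ • x - y))
    (hu : u = (a₁ - a₂)⁻¹ • (a₁ • x - y)) : z + u = x ∧ a₁ • z + a₂ • u = y := by
  have h₂₁ : a₂ - a₁ ≠ 0 := sub_ne_zero.mpr hne.symm
  have h₁₂ : a₁ - a₂ ≠ 0 := sub_ne_zero.mpr hne
  subst hz hu
  constructor <;> match_scalars <;> field_simp <;> ring

theorem add_le_two_mul_of_midpoint_concave {𝕜 X : Type*} [Semiring 𝕜] [AddCommGroup X]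
    [Module 𝕜 X] [Module ℝ X] {A : Set 𝕜} {U : X × X → EReal}
    (hconc : ∀ (x y : X), ∀ ε ∈ A, ∀ z₁ z₂ : X,
      U (x + z₁, y + ε • z₁) + U (x + z₂, y + ε • z₂) ≤
        2 * U (x + (2 : ℝ)⁻¹ • (z₁ + z₂), y + ε • ((2 : ℝ)⁻¹ • (z₁ + z₂))))
    (x y : X) {ε : 𝕜} (hε : ε ∈ A) (z : X) :
    U (x + z, y + ε • z) + U (x - z, y - ε • z) ≤ 2 * U (x, y) := by
  simpa [sub_eq_add_neg] using hconc x y ε hε z (-z)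

theorem EReal.ne_top_and_ne_top_of_add_nonpos {a b : EReal} (ha : a ≠ ⊥) (hb : b ≠ ⊥)
    (hab : a + b ≤ 0) : a ≠ ⊤ ∧ b ≠ ⊤ :=
  (EReal.add_ne_top_iff_ne_top₂ ha hb).mp (ne_top_of_le_ne_top EReal.zero_ne_top hab)

theorem burkholder_finite (𝕜 : Type) [RCLike 𝕜] (X : Type) [NormedAddCommGroup X]
    [NormedSpace 𝕜 X] [NormedSpace ℝ X]
    (A : Set 𝕜) (a₁ a₂ : 𝕜) (ha₁ : a₁ ∈ A) (ha₂ : a₂ ∈ A) (hne : a₁ ≠ a₂)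
    (U : X × X → EReal) (hbot : ∀ w, U w ≠ ⊥)
    (hconc : ∀ (x y : X), ∀ ε ∈ A, ∀ z₁ z₂ : X,
      U (x + z₁, y + ε • z₁) + U (x + z₂, y + ε • z₂) ≤
        2 * U (x + (2 : ℝ)⁻¹ • (z₁ + z₂), y + ε • ((2 : ℝ)⁻¹ • (z₁ + z₂))))
    (hU0 : ∀ (x : X), ∀ a ∈ A, U (x, a • x) ≤ 0) :
    ∀ x y : X, ∀ z u : X,
      z = (a₂ - a₁)⁻¹ • (a₂ • x - y) → u = (a₁ - a₂)⁻¹ • (a₁ • x - y) →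
      (U (x, y) + U (z - u, a₁ • z - a₂ • u) ≤ 2 * U (z, a₁ • z) ∧
        2 * U (z, a₁ • z) ≤ 0 ∧ U (x, y) ≠ ⊤ ∧ U (z - u, a₁ • z - a₂ • u) ≠ ⊤) := by
  intro x y z u hz hu
  obtain ⟨hx, hy⟩ := add_eq_and_smul_add_smul_eq_of_ne hne hz hu
  have hconcave := add_le_two_mul_of_midpoint_concave hconc z (a₁ • z) ha₂ u
  rw [hx, hy] at hconcave
  have hdiag : 2 * U (z, a₁ • z) ≤ 0 := mul_nonpos_of_nonneg_of_nonpos zero_le_two (hU0 z a₁ ha₁)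
  exact ⟨hconcave, hdiag,
    EReal.ne_top_and_ne_top_of_add_nonpos (hbot _) (hbot _) (hconcave.trans hdiag)⟩
end
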